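/- For all integers n and r with 0 ≤ r ≤ n−1, the cardinality of B⁺(n,r) equals U(n,r). -/

import Mathlib

open Finset

/-- A letter for arrangements: white, black, or decorated. -/
inductive Letter : Type
  | white : Letter
  | black : Letter
  | decorated : Letter
  deriving DecidableEq

/-- `B n r`: words of length `n` over `Letter` with exactly `r` black letters
whose last letter is not black. -/
def B (n r : ℕ) : Set (List Letter) :=
  {w | w.length = n ∧ w.count Letter.black = r ∧ w.getLast? ≠ some Letter.black}

/-- `B⁺ n r`: members of `B n r` containing a decorated letter strictly to the
right of the last black letter. -/
def Bplus (n r : ℕ) : Set (List Letter) :=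
  {w | w ∈ B n r ∧ ∃ a b : List Letter, w = a ++ Letter.decorated :: b ∧ Letter.black ∉ b}

/-- `U n r = ∑_{j=r+1}^{n} C(j−1,r)·2^{j−1−r}`. -/
def U (n r : ℕ) : ℕ := ∑ j ∈ Icc (r + 1) n, (j - 1).choose r * 2 ^ (j - 1 - r)

/-!
Classify a word of `B⁺(n+1, r)` by its last letter: it cannot be black; if it is white, the
remaining word lies in `B⁺(n, r)`; if it is decorated, the remaining word is an arbitrary word
of length `n` with `r` black letters, of which there are `C(n,r)·2^(n-r)`. This is exactly the
recursion `U(n+1, r) = U(n, r) + C(n,r)·2^(n-r)`, and both sides vanish for `n = 0`.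
-/

theorem Set.ncard_eq_sum_ncard_preimage {ι α β : Type*} [Fintype ι] {f : ι → α → β}
    (hf : ∀ i, Function.Injective (f i))
    (hdisj : Pairwise fun i j => Disjoint (Set.range (f i)) (Set.range (f j)))
    {S : Set β} (hS : S.Finite) (hcover : S ⊆ ⋃ i, Set.range (f i)) :
    S.ncard = ∑ i, (f i ⁻¹' S).ncard := by
  have hS_eq : S = ⋃ i, f i '' (f i ⁻¹' S) := by
    simp only [Set.image_preimage_eq_inter_range, ← Set.inter_iUnion]
    exact (Set.inter_eq_left.mpr hcover).symm
  conv_lhs => rw [hS_eq]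
  rw [Set.ncard_iUnion_of_finite (fun i => hS.subset (Set.image_preimage_subset _ _))
    (fun i j hij => (hdisj hij).mono (Set.image_subset_range _ _) (Set.image_subset_range _ _)),
    finsum_eq_sum_of_fintype]
  exact Finset.sum_congr rfl fun i _ => Set.ncard_image_of_injective _ (hf i)

theorem List.ncard_eq_sum_ncard_preimage_cons {α : Type*} [Fintype α] {S : Set (List α)}
    (hS : S.Finite) (hnil : [] ∉ S) : S.ncard = ∑ a, ((a :: ·) ⁻¹' S).ncard := by
  refine Set.ncard_eq_sum_ncard_preimage (fun _ => List.cons_injective) ?_ hS ?_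
  · refine fun a b hab => Set.disjoint_left.2 ?_
    rintro _ ⟨v, rfl⟩ ⟨u, h⟩
    exact hab (List.cons_eq_cons.1 h).1.symm
  · rintro (_ | ⟨a, v⟩) hw
    exacts [absurd hw hnil, Set.mem_iUnion.2 ⟨a, v, rfl⟩]

theorem List.ncard_eq_sum_ncard_preimage_concat {α : Type*} [Fintype α] {S : Set (List α)}
    (hS : S.Finite) (hnil : [] ∉ S) : S.ncard = ∑ a, ((· ++ [a]) ⁻¹' S).ncard := by
  refine Set.ncard_eq_sum_ncard_preimage (fun _ => List.append_left_injective _) ?_ hS ?_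
  · refine fun a b hab => Set.disjoint_left.2 ?_
    rintro _ ⟨v, rfl⟩ ⟨u, h⟩
    exact hab (List.append_singleton_inj.1 h).2.symm
  · intro w hw
    obtain rfl | ⟨v, a, rfl⟩ := List.eq_nil_or_concat w
    exacts [absurd hw hnil, Set.mem_iUnion.2 ⟨a, v, (List.concat_eq_append ..).symm⟩]

namespace Letter

instance : Fintype Letter :=
  ⟨{white, black, decorated}, by intro x; cases x <;> simp⟩

theorem sum_univ {M : Type*} [AddCommMonoid M] (f : Letter → M) :
    ∑ c, f c = f white + f black + f decorated := by
  simp [Finset.univ, Fintype.elems, add_assoc]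

end Letter

open Letter

def arrangements (n r : ℕ) : Set (List Letter) :=
  {w | w.length = n ∧ w.count black = r}

theorem arrangements_finite (n r : ℕ) : (arrangements n r).Finite :=
  (List.finite_length_eq Letter n).subset fun _ h => h.1

theorem nil_notMem_arrangements_succ (n r : ℕ) : [] ∉ arrangements (n + 1) r := by
  simp [arrangements]

theorem preimage_cons_arrangements {c : Letter} (hc : c ≠ black) (n r : ℕ) :
    (c :: ·) ⁻¹' arrangements (n + 1) r = arrangements n r := by
  ext v; simp [arrangements, hc]

theorem preimage_black_cons_arrangements_zero (n : ℕ) :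
    (black :: ·) ⁻¹' arrangements (n + 1) 0 = ∅ := by
  ext v; simp [arrangements]

theorem preimage_black_cons_arrangements_succ (n r : ℕ) :
    (black :: ·) ⁻¹' arrangements (n + 1) (r + 1) = arrangements n r := by
  ext v; simp [arrangements]

theorem ncard_arrangements (n r : ℕ) : (arrangements n r).ncard = n.choose r * 2 ^ (n - r) := by
  induction n generalizing r with
  | zero =>
    cases r with
    | zero => simp [show arrangements 0 0 = {[]} by ext w; cases w <;> simp [arrangements]]
    | succ r => simp [show arrangements 0 (r + 1) = ∅ by ext w; cases w <;> simp [arrangements]]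
  | succ n ih =>
    rw [List.ncard_eq_sum_ncard_preimage_cons (arrangements_finite _ _)
      (nil_notMem_arrangements_succ _ _), Letter.sum_univ,
      preimage_cons_arrangements (c := white) (by decide),
      preimage_cons_arrangements (c := decorated) (by decide), ih]
    cases r with
    | zero => simp [preimage_black_cons_arrangements_zero, pow_succ, mul_two]
    | succ r =>
      rw [preimage_black_cons_arrangements_succ, ih, Nat.choose_succ_succ', Nat.add_sub_add_right]
      have hpow : n.choose (r + 1) * 2 ^ (n - (r + 1)) * 2 = n.choose (r + 1) * 2 ^ (n - r) := by
        rcases le_or_gt (r + 1) n with hrn | hnr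
        · rw [mul_assoc, ← pow_succ, Nat.sub_add_eq, Nat.sub_add_cancel (by omega)]
        · simp [Nat.choose_eq_zero_of_lt hnr]
      rw [add_mul, ← hpow]; ring

def DecoratedAfterLastBlack (w : List Letter) : Prop :=
  ∃ a b : List Letter, w = a ++ decorated :: b ∧ black ∉ b

theorem not_decoratedAfterLastBlack_nil : ¬ DecoratedAfterLastBlack [] := by
  rintro ⟨a, b, h, -⟩
  simp at h

theorem decoratedAfterLastBlack_append_singleton (v : List Letter) (c : Letter) :
    DecoratedAfterLastBlack (v ++ [c]) ↔
      c = decorated ∨ c ≠ black ∧ DecoratedAfterLastBlack v := by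
  constructor
  · rintro ⟨a, b, h, hb⟩
    obtain rfl | ⟨b, d, rfl⟩ := List.eq_nil_or_concat b
    · exact .inl (List.append_singleton_inj.1 h).2
    · rw [List.concat_eq_append, ← List.cons_append, ← List.append_assoc,
        List.append_singleton_inj] at h
      obtain ⟨rfl, rfl⟩ := h
      exact .inr ⟨fun hc => hb (by simp [hc]), a, b, rfl, fun h => hb (by simp [h])⟩
  · rintro (rfl | ⟨hc, a, b, rfl, hb⟩)
    · exact ⟨v, [], rfl, by simp⟩
    · exact ⟨a, b ++ [c], by simp, by simp [hb, Ne.symm hc]⟩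

theorem DecoratedAfterLastBlack.getLast?_ne_black {w : List Letter}
    (h : DecoratedAfterLastBlack w) : w.getLast? ≠ some black := by
  obtain rfl | ⟨v, c, rfl⟩ := List.eq_nil_or_concat w
  · exact absurd h not_decoratedAfterLastBlack_nil
  · rw [List.concat_eq_append, decoratedAfterLastBlack_append_singleton] at h
    rw [List.concat_eq_append, List.getLast?_concat]
    rintro ⟨⟩
    simp at h

theorem Bplus_eq (n r : ℕ) :
    Bplus n r = {w | w ∈ arrangements n r ∧ DecoratedAfterLastBlack w} := by
  ext w
  exact ⟨fun ⟨⟨hl, hc, _⟩, h⟩ => ⟨⟨hl, hc⟩, h⟩,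
    fun ⟨⟨hl, hc⟩, h⟩ => ⟨⟨hl, hc, h.getLast?_ne_black⟩, h⟩⟩

theorem Bplus_subset_arrangements (n r : ℕ) : Bplus n r ⊆ arrangements n r := by
  rw [Bplus_eq]; exact fun _ h => h.1

theorem Bplus_zero (r : ℕ) : Bplus 0 r = ∅ := by
  refine Set.eq_empty_of_forall_notMem ?_
  rintro w ⟨⟨hl, -⟩, h⟩
  exact not_decoratedAfterLastBlack_nil (List.eq_nil_of_length_eq_zero hl ▸ h)

theorem preimage_concat_white_Bplus (n r : ℕ) :
    (· ++ [white]) ⁻¹' Bplus (n + 1) r = Bplus n r := by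
  ext v; simp [Bplus_eq, arrangements, decoratedAfterLastBlack_append_singleton]

theorem preimage_concat_black_Bplus (n r : ℕ) :
    (· ++ [black]) ⁻¹' Bplus (n + 1) r = ∅ := by
  ext v; simp [Bplus_eq, arrangements, decoratedAfterLastBlack_append_singleton]

theorem preimage_concat_decorated_Bplus (n r : ℕ) :
    (· ++ [decorated]) ⁻¹' Bplus (n + 1) r = arrangements n r := by
  ext v; simp [Bplus_eq, arrangements, decoratedAfterLastBlack_append_singleton]

theorem ncard_Bplus_succ (n r : ℕ) :
    (Bplus (n + 1) r).ncard = (Bplus n r).ncard + (arrangements n r).ncard := by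
  rw [List.ncard_eq_sum_ncard_preimage_concat
      ((arrangements_finite _ _).subset (Bplus_subset_arrangements _ _))
      (fun h => nil_notMem_arrangements_succ n r (Bplus_subset_arrangements _ _ h)),
    Letter.sum_univ, preimage_concat_white_Bplus, preimage_concat_black_Bplus,
    preimage_concat_decorated_Bplus, Set.ncard_empty, add_zero]

theorem U_succ (n r : ℕ) : U (n + 1) r = U n r + n.choose r * 2 ^ (n - r) := by
  rcases le_or_gt r n with hrn | hnr
  · rw [U, Finset.sum_Icc_succ_top (by omega), U]
    simp
  · rw [U, U, Finset.Icc_eq_empty (by omega), Finset.Icc_eq_empty (by omega),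
      Nat.choose_eq_zero_of_lt hnr, zero_mul, add_zero]

theorem card_Bplus_eq_U_general (n r : ℕ) : (Bplus n r).ncard = U n r := by
  induction n with
  | zero => simp [Bplus_zero, U]
  | succ n ih => rw [ncard_Bplus_succ, ih, ncard_arrangements, U_succ]

theorem card_Bplus_eq_U (n r : ℕ) (h : r + 1 ≤ n) : (Bplus n r).ncard = U n r :=
  card_Bplus_eq_U_general n r
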